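/- arXiv:1509.01967 — 5 statements merged into one kernel-verified Lean document; each statement's English description precedes it below -/
import Mathlib

section
/- Let M ⊆ ℝ^m be a nonempty open set, V : M → ℝ^m a smooth vector field, and f : M → ℝ a smooth function. Then the identity ∫_M v (Δ_V u) e^{-f} dx = ∫_M u (Δ_V v) e^{-f} dx holds for all twice continuously differentiable functions u, v with compact support contained in M if and only if V = ∇f on M. -/
open MeasureTheory Set
open scoped RealInnerProductSpace

noncomputable section

abbrev E (m : ℕ) := EuclideanSpace ℝ (Fin m)

/-- Euclidean Laplacian: sum of second partial derivatives. -/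
def lap {m : ℕ} (u : E m → ℝ) (x : E m) : ℝ :=
  ∑ i, fderiv ℝ (fun y => fderiv ℝ u y (EuclideanSpace.single i 1)) x
      (EuclideanSpace.single i 1)

/-- Euclidean divergence of a vector field. -/
def dvg {m : ℕ} (V : E m → E m) (x : E m) : ℝ :=
  ∑ i, fderiv ℝ V x (EuclideanSpace.single i 1) i

/-- The `V`-drift Laplacian `Δ_V u = Δu - ⟪V, ∇u⟫`. -/
def driftLap {m : ℕ} (V : E m → E m) (u : E m → ℝ) (x : E m) : ℝ :=
  lap u x - ⟪V x, gradient u x⟫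

open scoped Topology Manifold

/-! ### Auxiliary lemmas -/

/-- smooth cutoff equal to 1 near a compact set, supported in an open set -/
lemma exists_cutoff {m : ℕ} {K M : Set (E m)} (hK : IsCompact K) (hM : IsOpen M)
    (hKM : K ⊆ M) :
    ∃ χ : E m → ℝ, ContDiff ℝ ((⊤:ℕ∞) : WithTop ℕ∞) χ ∧ HasCompactSupport χ ∧ tsupport χ ⊆ M ∧
      ∃ U : Set (E m), IsOpen U ∧ K ⊆ U ∧ EqOn χ 1 U := by
  obtain ⟨δ, hδ, hsub⟩ := hK.exists_cthickening_subset_open hM hKM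
  have h1 : K ⊆ interior (Metric.cthickening δ K) :=
    (Metric.self_subset_thickening hδ K).trans
      (Metric.thickening_subset_interior_cthickening _ _)
  obtain ⟨χ, hχ1, hχ0, hχIcc⟩ :=
    exists_contMDiffMap_one_nhds_of_subset_interior (𝓘(ℝ, E m)) (n := (⊤:ℕ∞)) hK.isClosed h1
  obtain ⟨U, hUopen, hKU, hU1⟩ := eventually_nhdsSet_iff_exists.1 hχ1
  refine ⟨χ, ?_, ?_, ?_, U, hUopen, hKU, hU1⟩
  · exact contMDiff_iff_contDiff.1 χ.contMDiff
  · apply HasCompactSupport.intro (hK.cthickening (r := δ))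
    intro x hx
    exact hχ0 x hx
  · refine (closure_minimal ?_ (Metric.isClosed_cthickening)).trans hsub
    intro x hx
    by_contra h
    exact hx (hχ0 x h)

/-- Divergence-theorem style lemma: the integral of a directional derivative of a
compactly supported `C¹` function vanishes. -/
lemma integral_fderiv_apply_eq_zero {m : ℕ} {h : E m → ℝ}
    (hh : ContDiff ℝ 1 h) (hc : HasCompactSupport h) (v : E m) :
    ∫ x, fderiv ℝ h x v = 0 := by
  obtain ⟨C, hC⟩ := ContDiff.lipschitzWith_of_hasCompactSupport hc hh one_ne_zero
  obtain ⟨χ, hχs, hχc, -, U, hU, hKU, hU1⟩ :=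
    exists_cutoff hc (isOpen_univ (X := E m)) (subset_univ _)
  obtain ⟨D, hD⟩ := ContDiff.lipschitzWith_of_hasCompactSupport hχc hχs (by
    simp)
  have key := LipschitzWith.integral_lineDeriv_mul_eq (μ := volume) hC hD hχc v
  have hL : ∀ x, lineDeriv ℝ h x v * χ x = fderiv ℝ h x v := by
    intro x
    by_cases hx : x ∈ tsupport h
    · rw [hU1 (hKU hx), (hh.differentiable one_ne_zero x).lineDeriv_eq_fderiv]
      simp
    · have h1 : fderiv ℝ h x = 0 := by
        have := tsupport_fderiv_subset ℝ (f := h)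
        simpa using image_eq_zero_of_notMem_tsupport (fun hx' => hx (this hx'))
      rw [(hh.differentiable one_ne_zero x).lineDeriv_eq_fderiv, h1]
      simp
  have hR : ∀ x, lineDeriv ℝ χ x (-v) * h x = 0 := by
    intro x
    by_cases hx : x ∈ Function.support h
    · have hUx : U ∈ nhds x := hU.mem_nhds (hKU (subset_tsupport _ hx))
      have h2 : lineDeriv ℝ χ x (-v) = fderiv ℝ χ x (-v) :=
        ((hχs.differentiable (by simp)) x).lineDeriv_eq_fderiv
      rw [h2]
      have h3 : fderiv ℝ χ x = fderiv ℝ (fun _ => (1:ℝ)) x := by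
        apply Filter.EventuallyEq.fderiv_eq
        filter_upwards [hUx] with y hy using hU1 hy
      rw [h3, fderiv_fun_const]
      simp
    · simp [Function.notMem_support.1 hx]
  rw [integral_congr_ae (Filter.Eventually.of_forall hL),
      integral_congr_ae (Filter.Eventually.of_forall hR)] at key
  simpa using key

lemma glue_contDiff {m : ℕ} {n : WithTop ℕ∞} {M K : Set (E m)} (hM : IsOpen M)
    (hKc : IsClosed K) (hKM : K ⊆ M) {g : E m → ℝ} (hg : ContDiffOn ℝ n g M)
    (h0 : ∀ x ∉ K, g x = 0) : ContDiff ℝ n g := by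
  rw [← contDiffOn_univ]
  intro x _
  by_cases hx : x ∈ M
  · exact (hg.contDiffAt (hM.mem_nhds hx)).contDiffWithinAt
  · apply ContDiffWithinAt.congr_of_eventuallyEq (f := fun _ => (0:ℝ))
    · exact contDiffWithinAt_const
    · filter_upwards [nhdsWithin_le_nhds (hKc.isOpen_compl.mem_nhds
        (fun hK => hx (hKM hK)))] with y hy using h0 y hy
    · exact h0 x fun hK => hx (hKM hK)

lemma glue_continuous {m : ℕ} {M K : Set (E m)} (hM : IsOpen M)
    (hKc : IsClosed K) (hKM : K ⊆ M) {g : E m → ℝ} (hg : ContinuousOn g M)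
    (h0 : ∀ x ∉ K, g x = 0) : Continuous g := by
  rw [continuous_iff_continuousAt]
  intro x
  by_cases hx : x ∈ M
  · exact hg.continuousAt (hM.mem_nhds hx)
  · apply ContinuousAt.congr (f := fun _ => (0:ℝ)) continuousAt_const
    filter_upwards [hKc.isOpen_compl.mem_nhds (fun hK => hx (hKM hK))] with y hy
    exact (h0 y hy).symm

lemma integ_glue {m : ℕ} {M K : Set (E m)} (hM : IsOpen M) (hK : IsCompact K)
    (hKM : K ⊆ M) {g : E m → ℝ} (hg : ContinuousOn g M) (h0 : ∀ x ∉ K, g x = 0) :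
    IntegrableOn g M volume ∧ ∫ x in M, g x = ∫ x, g x := by
  have hc : Continuous g := glue_continuous hM hK.isClosed hKM hg h0
  have hcs : HasCompactSupport g := HasCompactSupport.intro hK h0
  exact ⟨(hc.integrable_of_hasCompactSupport hcs).integrableOn,
    setIntegral_eq_integral_of_forall_compl_eq_zero
      (fun x hx => h0 x (fun hK' => hx (hKM hK')))⟩

lemma inner_gradient_eq {m : ℕ} (u : E m → ℝ) (x a : E m) :
    ⟪gradient u x, a⟫ = fderiv ℝ u x a := by
  rw [gradient, InnerProductSpace.toDual_symm_apply]

lemma gradient_apply_coord {m : ℕ} (u : E m → ℝ) (x : E m) (i : Fin m) :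
    gradient u x i = fderiv ℝ u x (EuclideanSpace.single i 1) := by
  rw [← inner_gradient_eq, real_inner_comm]
  simpa using (EuclideanSpace.inner_single_left (𝕜 := ℝ) i 1 (gradient u x)).symm

lemma inner_coords {m : ℕ} (a b : E m) : ⟪a, b⟫ = ∑ i, a i * b i := by
  rw [real_inner_comm, PiLp.inner_apply]
  simp [mul_comm]

lemma fderiv_eq_zero_of_nmem_tsupport {m : ℕ} {u : E m → ℝ} {x : E m}
    (hx : x ∉ tsupport u) : fderiv ℝ u x = 0 :=
  image_eq_zero_of_notMem_tsupport fun hx' => hx (tsupport_fderiv_subset ℝ hx')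

lemma gradient_eq_zero_of_fderiv {m : ℕ} {u : E m → ℝ} {x : E m}
    (hx : fderiv ℝ u x = 0) : gradient u x = 0 := by
  rw [gradient, hx, map_zero]

lemma fderiv2_eq_zero_of_nmem_tsupport {m : ℕ} {u : E m → ℝ} {x : E m} (i : Fin m)
    (hx : x ∉ tsupport u) :
    fderiv ℝ (fun y => fderiv ℝ u y (EuclideanSpace.single i 1)) x = 0 := by
  have h : (fun y => fderiv ℝ u y (EuclideanSpace.single i 1)) =ᶠ[𝓝 x]
      (fun _ => (0:ℝ)) := by
    filter_upwards [(isClosed_tsupport u).isOpen_compl.mem_nhds hx] with y hy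
    rw [fderiv_eq_zero_of_nmem_tsupport hy]
    rfl
  rw [h.fderiv_eq, fderiv_fun_const]
  rfl

lemma driftLap_eq_zero_of_nmem_tsupport {m : ℕ} {V : E m → E m} {u : E m → ℝ} {x : E m}
    (hx : x ∉ tsupport u) : driftLap V u x = 0 := by
  have h1 : lap u x = 0 := by
    apply Finset.sum_eq_zero
    intro i _
    rw [fderiv2_eq_zero_of_nmem_tsupport i hx]
    rfl
  rw [driftLap, h1, gradient_eq_zero_of_fderiv (fderiv_eq_zero_of_nmem_tsupport hx)]
  simp

lemma hderiv2 {m : ℕ} {u : E m → ℝ} (hu : ContDiff ℝ 2 u) (i : Fin m) :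
    ContDiff ℝ 1 (fun y => fderiv ℝ u y (EuclideanSpace.single i 1)) :=
  (hu.fderiv_right (by norm_num)).clm_apply contDiff_const

lemma lap_continuous {m : ℕ} {u : E m → ℝ} (hu : ContDiff ℝ 2 u) :
    Continuous (lap u) := by
  apply continuous_finset_sum
  intro i _
  exact (((hderiv2 hu i).continuous_fderiv one_ne_zero).clm_apply continuous_const)

lemma gradient_continuous {m : ℕ} {u : E m → ℝ} (hu : ContDiff ℝ 2 u) :
    Continuous (gradient u) := by
  have : gradient u = fun x => (InnerProductSpace.toDual ℝ (E m)).symm (fderiv ℝ u x) := rfl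
  rw [this]
  exact (InnerProductSpace.toDual ℝ (E m)).symm.continuous.comp
    (hu.continuous_fderiv (by norm_num))

lemma sum_fderiv_F {m : ℕ} {M : Set (E m)} (hM : IsOpen M)
    {f u v : E m → ℝ} (hf : ContDiffOn ℝ (⊤ : ℕ∞) f M)
    (hu : ContDiff ℝ 2 u) (hv : ContDiff ℝ 2 v) {x : E m} (hx : x ∈ M) :
    ∑ i, fderiv ℝ (fun y =>
        (v y * fderiv ℝ u y (EuclideanSpace.single i 1)
          - u y * fderiv ℝ v y (EuclideanSpace.single i 1)) * Real.exp (-f y)) x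
      (EuclideanSpace.single i 1)
    = (v x * lap u x - u x * lap v x
        - ∑ i, (v x * fderiv ℝ u x (EuclideanSpace.single i 1)
            - u x * fderiv ℝ v x (EuclideanSpace.single i 1))
            * fderiv ℝ f x (EuclideanSpace.single i 1)) * Real.exp (-f x) := by
  have hfd : DifferentiableAt ℝ f x :=
    (hf.contDiffAt (hM.mem_nhds hx)).differentiableAt (by simp)
  have hw : HasFDerivAt (fun y => Real.exp (-f y))
      (Real.exp (-f x) • (-fderiv ℝ f x)) x := (hfd.hasFDerivAt.neg).exp
  have key : ∀ i : Fin m, fderiv ℝ (fun y =>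
        (v y * fderiv ℝ u y (EuclideanSpace.single i 1)
          - u y * fderiv ℝ v y (EuclideanSpace.single i 1)) * Real.exp (-f y)) x
      (EuclideanSpace.single i 1)
      = (v x * fderiv ℝ (fun y => fderiv ℝ u y (EuclideanSpace.single i 1)) x
            (EuclideanSpace.single i 1)
          - u x * fderiv ℝ (fun y => fderiv ℝ v y (EuclideanSpace.single i 1)) x
            (EuclideanSpace.single i 1)) * Real.exp (-f x)
        - (v x * fderiv ℝ u x (EuclideanSpace.single i 1)
            - u x * fderiv ℝ v x (EuclideanSpace.single i 1))
            * fderiv ℝ f x (EuclideanSpace.single i 1) * Real.exp (-f x) := by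
    intro i
    set e := EuclideanSpace.single (𝕜 := ℝ) i (1:ℝ) with he
    have hdu := hderiv2 hu i
    have hdv := hderiv2 hv i
    have hdux : HasFDerivAt (fun y => fderiv ℝ u y e)
        (fderiv ℝ (fun y => fderiv ℝ u y e) x) x :=
      (hdu.differentiable one_ne_zero x).hasFDerivAt
    have hdvx : HasFDerivAt (fun y => fderiv ℝ v y e)
        (fderiv ℝ (fun y => fderiv ℝ v y e) x) x :=
      (hdv.differentiable one_ne_zero x).hasFDerivAt
    have hux : HasFDerivAt u (fderiv ℝ u x) x :=
      (hu.differentiable (by norm_num) x).hasFDerivAt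
    have hvx : HasFDerivAt v (fderiv ℝ v x) x :=
      (hv.differentiable (by norm_num) x).hasFDerivAt
    have hA : HasFDerivAt (fun y => v y * fderiv ℝ u y e - u y * fderiv ℝ v y e)
        ((v x • fderiv ℝ (fun y => fderiv ℝ u y e) x + fderiv ℝ u x e • fderiv ℝ v x)
          - (u x • fderiv ℝ (fun y => fderiv ℝ v y e) x + fderiv ℝ v x e • fderiv ℝ u x))
        x := (hvx.mul hdux).sub (hux.mul hdvx)
    have hF := hA.fun_mul hw
    rw [hF.fderiv]
    simp only [ContinuousLinearMap.add_apply, ContinuousLinearMap.smul_apply,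
      ContinuousLinearMap.sub_apply, ContinuousLinearMap.neg_apply, smul_eq_mul]
    ring
  rw [Finset.sum_congr rfl (fun i _ => key i), lap, lap]
  simp only [Finset.sum_sub_distrib, ← Finset.sum_mul, ← Finset.mul_sum]
  ring

/-- The master integration-by-parts identity. -/
lemma master {m : ℕ} {M : Set (E m)} (hM : IsOpen M)
    {V : E m → E m} (hV : ContDiffOn ℝ (⊤ : ℕ∞) V M)
    {f : E m → ℝ} (hf : ContDiffOn ℝ (⊤ : ℕ∞) f M)
    {u v : E m → ℝ} (hu : ContDiff ℝ 2 u) (hcu : HasCompactSupport u)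
    (hsu : tsupport u ⊆ M)
    (hv : ContDiff ℝ 2 v) (hcv : HasCompactSupport v) (hsv : tsupport v ⊆ M) :
    (∫ x in M, v x * driftLap V u x * Real.exp (-f x)) -
      (∫ x in M, u x * driftLap V v x * Real.exp (-f x)) =
    ∫ x in M, ⟪v x • gradient u x - u x • gradient v x,
        gradient f x - V x⟫ * Real.exp (-f x) := by
  classical
  set w : E m → ℝ := fun y => Real.exp (-f y) with hwdef
  set K : Set (E m) := tsupport u ∩ tsupport v with hKdef
  have hKcpt : IsCompact K := hcu.inter_right (isClosed_tsupport v)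
  have hKM : K ⊆ M := (inter_subset_left).trans hsu
  have hwM : ContDiffOn ℝ 1 w M :=
    Real.contDiff_exp.comp_contDiffOn ((hf.of_le (by simp)).neg)
  -- the vector field components
  set F : Fin m → E m → ℝ := fun i y =>
    (v y * fderiv ℝ u y (EuclideanSpace.single i 1)
      - u y * fderiv ℝ v y (EuclideanSpace.single i 1)) * w y with hFdef
  have hF0 : ∀ i, ∀ x ∉ K, F i x = 0 := by
    intro i x hx
    rcases not_and_or.1 hx with hx' | hx'
    · have h1 : u x = 0 := image_eq_zero_of_notMem_tsupport hx'
      have h2 : fderiv ℝ u x = 0 := fderiv_eq_zero_of_nmem_tsupport hx'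
      simp [hFdef, h1, h2]
    · have h1 : v x = 0 := image_eq_zero_of_notMem_tsupport hx'
      have h2 : fderiv ℝ v x = 0 := fderiv_eq_zero_of_nmem_tsupport hx'
      simp [hFdef, h1, h2]
  have hFC1 : ∀ i, ContDiff ℝ 1 (F i) := by
    intro i
    apply glue_contDiff hM hKcpt.isClosed hKM ?_ (hF0 i)
    apply ContDiffOn.mul ?_ hwM
    exact (((hv.of_le (by norm_num)).contDiffOn).mul (hderiv2 hu i).contDiffOn).sub
      (((hu.of_le (by norm_num)).contDiffOn).mul (hderiv2 hv i).contDiffOn)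
  have hFc : ∀ i, HasCompactSupport (F i) := fun i =>
    HasCompactSupport.intro hKcpt (hF0 i)
  have hkey : ∀ i : Fin m,
      ∫ x, fderiv ℝ (F i) x (EuclideanSpace.single i 1) = 0 := fun i =>
    integral_fderiv_apply_eq_zero (hFC1 i) (hFc i) _
  -- the integrand G
  set G : E m → ℝ := fun x => ∑ i, fderiv ℝ (F i) x (EuclideanSpace.single i 1)
    with hGdef
  have hGint : ∀ i, Integrable (fun x => fderiv ℝ (F i) x (EuclideanSpace.single i 1)) := by
    intro i
    apply Continuous.integrable_of_hasCompactSupport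
    · exact ((hFC1 i).continuous_fderiv one_ne_zero).clm_apply continuous_const
    · exact ((hFc i).fderiv ℝ).comp_left (g := fun L : E m →L[ℝ] ℝ =>
        L (EuclideanSpace.single i 1)) rfl
  have hGzero : ∫ x, G x = 0 := by
    rw [hGdef]
    rw [integral_finset_sum _ (fun i _ => hGint i)]
    simp [hkey]
  have hG0 : ∀ x ∉ K, G x = 0 := by
    intro x hx
    apply Finset.sum_eq_zero
    intro i _
    have h : (F i) =ᶠ[𝓝 x] (fun _ => (0:ℝ)) := by
      filter_upwards [hKcpt.isClosed.isOpen_compl.mem_nhds hx] with y hy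
      exact hF0 i y hy
    rw [h.fderiv_eq, fderiv_fun_const]
    rfl
  have hGM : ∫ x in M, G x = 0 := by
    rw [setIntegral_eq_integral_of_forall_compl_eq_zero
      (fun x hx => hG0 x (fun hK' => hx (hKM hK')))]
    exact hGzero
  -- the three integrands
  set g₁ : E m → ℝ := fun x => v x * driftLap V u x * w x with hg₁def
  set g₂ : E m → ℝ := fun x => u x * driftLap V v x * w x with hg₂def
  set g₃ : E m → ℝ := fun x => ⟪v x • gradient u x - u x • gradient v x,
      gradient f x - V x⟫ * w x with hg₃def
  have hg₁0 : ∀ x ∉ K, g₁ x = 0 := by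
    intro x hx
    rcases not_and_or.1 hx with hx' | hx'
    · simp [hg₁def, driftLap_eq_zero_of_nmem_tsupport hx']
    · simp [hg₁def, image_eq_zero_of_notMem_tsupport hx']
  have hg₂0 : ∀ x ∉ K, g₂ x = 0 := by
    intro x hx
    rcases not_and_or.1 hx with hx' | hx'
    · simp [hg₂def, image_eq_zero_of_notMem_tsupport hx']
    · simp [hg₂def, driftLap_eq_zero_of_nmem_tsupport hx']
  have hg₃0 : ∀ x ∉ K, g₃ x = 0 := by
    intro x hx
    have hvan : v x • gradient u x - u x • gradient v x = 0 := by
      rcases not_and_or.1 hx with hx' | hx'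
      · rw [image_eq_zero_of_notMem_tsupport hx',
          gradient_eq_zero_of_fderiv (fderiv_eq_zero_of_nmem_tsupport hx')]
        simp
      · rw [image_eq_zero_of_notMem_tsupport hx',
          gradient_eq_zero_of_fderiv (fderiv_eq_zero_of_nmem_tsupport hx')]
        simp
    show ⟪v x • gradient u x - u x • gradient v x, gradient f x - V x⟫ * w x = 0
    rw [hvan, inner_zero_left, zero_mul]
  -- continuity on M
  have hgradf : ContinuousOn (gradient f) M := by
    have h : gradient f = fun x => (InnerProductSpace.toDual ℝ (E m)).symm
        (fderiv ℝ f x) := rfl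
    rw [h]
    exact (InnerProductSpace.toDual ℝ (E m)).symm.continuous.comp_continuousOn
      (hf.continuousOn_fderiv_of_isOpen hM (by exact_mod_cast le_top))
  have hdriftu : ContinuousOn (driftLap V u) M := by
    apply ContinuousOn.sub (lap_continuous hu).continuousOn
    exact ContinuousOn.inner hV.continuousOn (gradient_continuous hu).continuousOn
  have hdriftv : ContinuousOn (driftLap V v) M := by
    apply ContinuousOn.sub (lap_continuous hv).continuousOn
    exact ContinuousOn.inner hV.continuousOn (gradient_continuous hv).continuousOn
  have hg₁c : ContinuousOn g₁ M :=
    (((hv.continuous).continuousOn.mul hdriftu).mul hwM.continuousOn)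
  have hg₂c : ContinuousOn g₂ M :=
    (((hu.continuous).continuousOn.mul hdriftv).mul hwM.continuousOn)
  have hg₃c : ContinuousOn g₃ M := by
    apply ContinuousOn.mul ?_ hwM.continuousOn
    apply ContinuousOn.inner
    · exact (((hv.continuous).smul (gradient_continuous hu)).sub
        ((hu.continuous).smul (gradient_continuous hv))).continuousOn
    · exact hgradf.sub hV.continuousOn
  obtain ⟨hi₁, -⟩ := integ_glue hM hKcpt hKM hg₁c hg₁0
  obtain ⟨hi₂, -⟩ := integ_glue hM hKcpt hKM hg₂c hg₂0
  obtain ⟨hi₃, -⟩ := integ_glue hM hKcpt hKM hg₃c hg₃0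
  -- pointwise identity on M
  have hEq : EqOn (fun x => g₁ x - g₂ x - g₃ x) G M := by
    intro x hx
    have hwx : Real.exp (-f x) = w x := rfl
    have hGx : G x = (v x * lap u x - u x * lap v x
        - ∑ i, (v x * fderiv ℝ u x (EuclideanSpace.single i 1)
            - u x * fderiv ℝ v x (EuclideanSpace.single i 1))
            * fderiv ℝ f x (EuclideanSpace.single i 1)) * w x := by
      rw [hGdef]
      simp only [hFdef]
      rw [← hwx]
      exact sum_fderiv_F hM hf hu hv hx
    have e1 : ⟪V x, gradient u x⟫ = ∑ i, V x i * fderiv ℝ u x (EuclideanSpace.single i 1) := by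
      rw [inner_coords]
      exact Finset.sum_congr rfl fun i _ => by rw [gradient_apply_coord]
    have e2 : ⟪V x, gradient v x⟫ = ∑ i, V x i * fderiv ℝ v x (EuclideanSpace.single i 1) := by
      rw [inner_coords]
      exact Finset.sum_congr rfl fun i _ => by rw [gradient_apply_coord]
    have e3 : ⟪v x • gradient u x - u x • gradient v x, gradient f x - V x⟫
        = ∑ i, (v x * fderiv ℝ u x (EuclideanSpace.single i 1)
            - u x * fderiv ℝ v x (EuclideanSpace.single i 1))
            * (fderiv ℝ f x (EuclideanSpace.single i 1) - V x i) := by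
      rw [inner_coords]
      refine Finset.sum_congr rfl fun i _ => ?_
      have c1 : (v x • gradient u x - u x • gradient v x) i
          = v x * gradient u x i - u x * gradient v x i := rfl
      have c2 : (gradient f x - V x) i = gradient f x i - V x i := rfl
      rw [c1, c2, gradient_apply_coord, gradient_apply_coord, gradient_apply_coord]
    have e4 : ∑ i, (v x * fderiv ℝ u x (EuclideanSpace.single i 1)
            - u x * fderiv ℝ v x (EuclideanSpace.single i 1))
            * (fderiv ℝ f x (EuclideanSpace.single i 1) - V x i)
        = (∑ i, (v x * fderiv ℝ u x (EuclideanSpace.single i 1)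
            - u x * fderiv ℝ v x (EuclideanSpace.single i 1))
            * fderiv ℝ f x (EuclideanSpace.single i 1))
          - v x * (∑ i, V x i * fderiv ℝ u x (EuclideanSpace.single i 1))
          + u x * (∑ i, V x i * fderiv ℝ v x (EuclideanSpace.single i 1)) := by
      rw [Finset.mul_sum, Finset.mul_sum, ← Finset.sum_sub_distrib,
        ← Finset.sum_add_distrib]
      exact Finset.sum_congr rfl fun i _ => by ring
    show g₁ x - g₂ x - g₃ x = G x
    rw [hGx, hg₁def, hg₂def, hg₃def]
    simp only [driftLap, e1, e2, e3, e4]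
    ring
  -- conclude
  have A : ∫ x in M, (g₁ x - g₂ x - g₃ x) =
      (∫ x in M, (g₁ x - g₂ x)) - ∫ x in M, g₃ x := integral_sub (hi₁.sub hi₂) hi₃
  have B : ∫ x in M, (g₁ x - g₂ x) = (∫ x in M, g₁ x) - ∫ x in M, g₂ x :=
    integral_sub hi₁ hi₂
  have C : ∫ x in M, (g₁ x - g₂ x - g₃ x) = 0 := by
    rw [setIntegral_congr_fun hM.measurableSet hEq]
    exact hGM
  rw [A, B] at C
  linarith [C]

/-- `Δ_V` is self-adjoint for the weighted `L²` inner product with density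
`e^{-f}` (tested on all `C²` functions with compact support in `M`) if and
only if `V = ∇f` on `M`. -/
theorem stmt_1 {m : ℕ} (M : Set (E m)) (hM : IsOpen M) (hne : M.Nonempty)
    (V : E m → E m) (hV : ContDiffOn ℝ (⊤ : ℕ∞) V M)
    (f : E m → ℝ) (hf : ContDiffOn ℝ (⊤ : ℕ∞) f M) :
    (∀ u v : E m → ℝ,
      ContDiff ℝ 2 u → HasCompactSupport u → tsupport u ⊆ M →
      ContDiff ℝ 2 v → HasCompactSupport v → tsupport v ⊆ M →
      ∫ x in M, v x * driftLap V u x * Real.exp (-f x) =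
        ∫ x in M, u x * driftLap V v x * Real.exp (-f x)) ↔
    ∀ x ∈ M, V x = gradient f x := by
  constructor
  · -- hard direction
    intro H x₀ hx₀
    set w : E m → ℝ := fun y => Real.exp (-f y) with hwdef
    set W : E m → E m := fun x => gradient f x - V x with hWdef
    have hgradf : ContinuousOn (gradient f) M := by
      have h : gradient f = fun x => (InnerProductSpace.toDual ℝ (E m)).symm
          (fderiv ℝ f x) := rfl
      rw [h]
      exact (InnerProductSpace.toDual ℝ (E m)).symm.continuous.comp_continuousOn
        (hf.continuousOn_fderiv_of_isOpen hM (by exact_mod_cast le_top))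
    have hWc : ContinuousOn W M := hgradf.sub hV.continuousOn
    have hwc : ContinuousOn w M :=
      Real.continuous_exp.comp_continuousOn (hf.continuousOn.neg)
    have stepA : ∀ u v : E m → ℝ,
        ContDiff ℝ 2 u → HasCompactSupport u → tsupport u ⊆ M →
        ContDiff ℝ 2 v → HasCompactSupport v → tsupport v ⊆ M →
        ∫ x in M, ⟪v x • gradient u x - u x • gradient v x, W x⟫ * w x = 0 := by
      intro u v hu hcu hsu hv hcv hsv
      have h1 := master hM hV hf hu hcu hsu hv hcv hsv
      rw [H u v hu hcu hsu hv hcv hsv, sub_self] at h1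
      exact h1.symm
    have inner_expand : ∀ (a b : E m → ℝ) (x : E m),
        ⟪b x • gradient a x - a x • gradient b x, W x⟫
          = b x * fderiv ℝ a x (W x) - a x * fderiv ℝ b x (W x) := by
      intro a b x
      rw [inner_sub_left, real_inner_smul_left, real_inner_smul_left,
        inner_gradient_eq, inner_gradient_eq]
    -- main step: ∀ i and all smooth compactly supported g in M, ∫ g • (W_i w) = 0
    have hokey : ∀ (i : Fin m) (g : E m → ℝ), ContDiff ℝ ((⊤:ℕ∞) : WithTop ℕ∞) g →
        HasCompactSupport g → tsupport g ⊆ M →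
        ∫ x, g x * (W x i * w x) = 0 := by
      intro i g hg hgc hgs
      obtain ⟨χ, hχs, hχc, hχM, U, hU, hGU, hU1⟩ := exists_cutoff hgc hM hgs
      set c : E m → ℝ := fun y => EuclideanSpace.proj (𝕜 := ℝ) i y with hcdef
      have hcsm : ContDiff ℝ 2 c := (EuclideanSpace.proj (𝕜 := ℝ) i).contDiff
      have h2top : (2 : WithTop ℕ∞) ≤ ((⊤:ℕ∞) : WithTop ℕ∞) := by
        norm_cast
      have hgc2 : ContDiff ℝ 2 g := hg.of_le h2top
      have hχ2 : ContDiff ℝ 2 χ := hχs.of_le h2top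
      -- the tests
      set v₂ : E m → ℝ := fun y => c y * χ y with hv₂def
      set g₂ : E m → ℝ := fun y => c y * g y with hg₂def
      have hv₂2 : ContDiff ℝ 2 v₂ := hcsm.mul hχ2
      have hv₂c : HasCompactSupport v₂ := hχc.mul_left
      have hv₂s : tsupport v₂ ⊆ M :=
        (closure_mono (Function.support_mul_subset_right _ _)).trans hχM
      have hg₂2 : ContDiff ℝ 2 g₂ := hcsm.mul hgc2
      have hg₂c : HasCompactSupport g₂ := hgc.mul_left
      have hg₂s' : tsupport g₂ ⊆ tsupport g :=
        closure_mono (Function.support_mul_subset_right _ _)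
      have hg₂s : tsupport g₂ ⊆ M := hg₂s'.trans hgs
      -- pointwise identities
      have hC : ∀ x : E m, ⟪v₂ x • gradient g x - g x • gradient v₂ x, W x⟫ * w x
          = (c x * ⟪gradient g x, W x⟫) * w x - (g x * W x i) * w x := by
        intro x
        rw [inner_expand, inner_gradient_eq]
        by_cases hx : x ∈ U
        · have hfv₂ : fderiv ℝ v₂ x = fderiv ℝ c x := by
            apply Filter.EventuallyEq.fderiv_eq
            filter_upwards [hU.mem_nhds hx] with y hy
            simp [hv₂def, hU1 hy]
          have hfc : fderiv ℝ c x = EuclideanSpace.proj (𝕜 := ℝ) i :=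
            (EuclideanSpace.proj (𝕜 := ℝ) i).fderiv
          have hv₂x : v₂ x = c x := by simp [hv₂def, hU1 hx]
          rw [hfv₂, hfc, hv₂x]
          show (c x * fderiv ℝ g x (W x) - g x * W x i) * w x = _
          ring
        · have hxg : x ∉ tsupport g := fun h => hx (hGU h)
          have h1 : g x = 0 := image_eq_zero_of_notMem_tsupport hxg
          have h2 : fderiv ℝ g x = 0 := fderiv_eq_zero_of_nmem_tsupport hxg
          rw [h1, h2]
          simp
      have hD : ∀ x : E m, ⟪χ x • gradient g₂ x - g₂ x • gradient χ x, W x⟫ * w x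
          = ((g x * W x i) * w x + (c x * ⟪gradient g x, W x⟫) * w x) := by
        intro x
        rw [inner_expand, inner_gradient_eq]
        have hprod : fderiv ℝ g₂ x (W x) = c x * fderiv ℝ g x (W x) + g x * W x i := by
          have hdg : DifferentiableAt ℝ g x :=
            hgc2.differentiable (by norm_num) x
          have hdc : DifferentiableAt ℝ c x :=
            (EuclideanSpace.proj (𝕜 := ℝ) i).differentiableAt
          have := fderiv_fun_mul hdc hdg
          rw [hg₂def]
          rw [this]
          have hfc : fderiv ℝ c x = EuclideanSpace.proj (𝕜 := ℝ) i :=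
            (EuclideanSpace.proj (𝕜 := ℝ) i).fderiv
          simp only [ContinuousLinearMap.add_apply, ContinuousLinearMap.smul_apply,
            smul_eq_mul, hfc]
          have hpr : (EuclideanSpace.proj (𝕜 := ℝ) i) (W x) = W x i := rfl
          rw [hpr]
        by_cases hx : x ∈ U
        · have hχx : χ x = 1 := hU1 hx
          have hfχ : fderiv ℝ χ x = 0 := by
            have h3 : fderiv ℝ χ x = fderiv ℝ (fun _ => (1:ℝ)) x := by
              apply Filter.EventuallyEq.fderiv_eq
              filter_upwards [hU.mem_nhds hx] with y hy using hU1 hy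
            rw [h3, fderiv_fun_const]
            rfl
          rw [hχx, hfχ, hprod]
          show (1 * (c x * fderiv ℝ g x (W x) + g x * W x i)
            - g₂ x * (0 : E m →L[ℝ] ℝ) (W x)) * w x = _
          simp only [ContinuousLinearMap.zero_apply]
          ring
        · have hxg : x ∉ tsupport g := fun h => hx (hGU h)
          have hxg₂ : x ∉ tsupport g₂ := fun h => hxg (hg₂s' h)
          have h1 : g x = 0 := image_eq_zero_of_notMem_tsupport hxg
          have h2 : fderiv ℝ g x = 0 := fderiv_eq_zero_of_nmem_tsupport hxg
          have h3 : g₂ x = 0 := image_eq_zero_of_notMem_tsupport hxg₂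
          have h4 : fderiv ℝ g₂ x = 0 := fderiv_eq_zero_of_nmem_tsupport hxg₂
          rw [h1, h2, h3, h4]
          simp
      -- integrability of the two pieces
      set t₁ : E m → ℝ := fun x => (c x * ⟪gradient g x, W x⟫) * w x with ht₁def
      set t₂ : E m → ℝ := fun x => (g x * W x i) * w x with ht₂def
      have ht₁0 : ∀ x ∉ tsupport g, t₁ x = 0 := by
        intro x hx
        have h2 : gradient g x = 0 :=
          gradient_eq_zero_of_fderiv (fderiv_eq_zero_of_nmem_tsupport hx)
        simp [ht₁def, h2, fderiv_eq_zero_of_nmem_tsupport hx]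
      have ht₂0 : ∀ x ∉ tsupport g, t₂ x = 0 := by
        intro x hx
        simp [ht₂def, image_eq_zero_of_notMem_tsupport hx]
      have ht₁c : ContinuousOn t₁ M := by
        apply ContinuousOn.mul ?_ hwc
        apply ContinuousOn.mul (hcsm.continuous.continuousOn)
        exact ContinuousOn.inner (gradient_continuous hgc2).continuousOn hWc
      have ht₂c : ContinuousOn t₂ M := by
        apply ContinuousOn.mul ?_ hwc
        apply ContinuousOn.mul (hg.continuous.continuousOn)
        exact (EuclideanSpace.proj (𝕜 := ℝ) i).continuous.comp_continuousOn hWc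
      obtain ⟨hi₁, -⟩ := integ_glue hM hgc hgs ht₁c ht₁0
      obtain ⟨hi₂, hval₂⟩ := integ_glue hM hgc hgs ht₂c ht₂0
      -- conclude from the two instances of stepA
      have hCint := stepA g v₂ hgc2 hgc hgs hv₂2 hv₂c hv₂s
      have hDint := stepA g₂ χ hg₂2 hg₂c hg₂s hχ2 hχc hχM
      rw [setIntegral_congr_fun hM.measurableSet (fun x _ => hC x)] at hCint
      rw [setIntegral_congr_fun hM.measurableSet (fun x _ => hD x)] at hDint
      rw [integral_sub hi₁ hi₂] at hCint
      rw [integral_add hi₂ hi₁] at hDint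
      have ht₂int : ∫ x in M, t₂ x = 0 := by linarith
      rw [hval₂] at ht₂int
      rw [← ht₂int]
      apply integral_congr_ae
      filter_upwards with x
      rw [ht₂def]
      ring
    -- apply the distribution lemma for each coordinate
    have hae : ∀ i : Fin m, ∀ᵐ x, x ∈ M → W x i * w x = 0 := by
      intro i
      apply hM.ae_eq_zero_of_integral_contDiff_smul_eq_zero
      · apply ContinuousOn.locallyIntegrableOn ?_ hM.measurableSet
        apply ContinuousOn.mul ?_ hwc
        exact (EuclideanSpace.proj (𝕜 := ℝ) i).continuous.comp_continuousOn hWc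
      · intro g hgsm hgc hgs
        exact hokey i g hgsm hgc hgs
    -- upgrade to pointwise at x₀ by continuity
    have hWzero : ∀ i : Fin m, W x₀ i * w x₀ = 0 := by
      intro i
      by_contra hne'
      set φ : E m → ℝ := fun x => W x i * w x with hφdef
      have hφc : ContinuousOn φ M := by
        apply ContinuousOn.mul ?_ hwc
        exact (EuclideanSpace.proj (𝕜 := ℝ) i).continuous.comp_continuousOn hWc
      have hO : IsOpen (M ∩ φ ⁻¹' ({0}ᶜ)) :=
        hφc.isOpen_inter_preimage hM isOpen_compl_singleton
      have hOne : (M ∩ φ ⁻¹' ({0}ᶜ)).Nonempty := ⟨x₀, hx₀, hne'⟩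
      have hpos : 0 < volume (M ∩ φ ⁻¹' ({0}ᶜ)) := hO.measure_pos volume hOne
      have hnull : volume (M ∩ φ ⁻¹' ({0}ᶜ)) = 0 := by
        apply measure_mono_null ?_ ((ae_iff).1 (hae i))
        rintro x ⟨hx1, hx2⟩
        simp only [mem_setOf_eq]
        intro hcon
        exact hx2 (hcon hx1)
      rw [hnull] at hpos
      exact lt_irrefl 0 hpos
    have hwpos : w x₀ ≠ 0 := Real.exp_ne_zero _
    have : ∀ i : Fin m, W x₀ i = 0 := by
      intro i
      rcases mul_eq_zero.1 (hWzero i) with h | h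
      · exact h
      · exact absurd h hwpos
    ext i
    have h := this i
    have : gradient f x₀ i - V x₀ i = 0 := h
    linarith
  · -- easy direction
    intro hVf u v hu hcu hsu hv hcv hsv
    have h1 := master hM hV hf hu hcu hsu hv hcv hsv
    have h0 : ∫ x in M, ⟪v x • gradient u x - u x • gradient v x,
        gradient f x - V x⟫ * Real.exp (-f x) = 0 := by
      rw [setIntegral_congr_fun hM.measurableSet
        (g := fun _ => (0:ℝ)) (fun x hx => by
          rw [hVf x hx]
          simp)]
      simp
    rw [h0] at h1
    linarith

end
end

section
/- Let r₀ > 0 and λ > 0. Let p : [0, r₀] → ℝ be continuous with p(0) = 0, p > 0 on (0, r₀], and p continuously differentiable on (0, r₀]. Let a : [0, r₀] → ℝ be continuously differentiable on [0, r₀] and twice differentiable on (0, r₀], with a > 0 on [0, r₀), and suppose a''(t) + (p'(t)/p(t)) a'(t) + λ a(t) = 0 for all t ∈ (0, r₀]. Then a'(t) < 0 for every t ∈ (0, r₀]; in particular a'(r₀) < 0. -/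
open Set

/-- Monotonicity of the radial principal eigenfunction: if `a` is a positive
solution of `a'' + (p'/p) a' + λ a = 0` on `(0, r₀]` with `λ > 0`, where
`p(0) = 0` and `p > 0` on `(0, r₀]`, then `a' < 0` on `(0, r₀]`. -/
theorem stmt_6 (r₀ lam : ℝ) (hr : 0 < r₀) (hlam : 0 < lam)
    (p p' a a' a'' : ℝ → ℝ)
    (hpc : ContinuousOn p (Icc 0 r₀)) (hp0 : p 0 = 0)
    (hppos : ∀ t ∈ Ioc 0 r₀, 0 < p t)
    (hpd : ∀ t ∈ Ioc 0 r₀, HasDerivWithinAt p (p' t) (Icc 0 r₀) t)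
    (hp'c : ContinuousOn p' (Ioc 0 r₀))
    (had : ∀ t ∈ Icc 0 r₀, HasDerivWithinAt a (a' t) (Icc 0 r₀) t)
    (ha'c : ContinuousOn a' (Icc 0 r₀))
    (ha'd : ∀ t ∈ Ioc 0 r₀, HasDerivWithinAt a' (a'' t) (Icc 0 r₀) t)
    (hapos : ∀ t ∈ Ico 0 r₀, 0 < a t)
    (heq : ∀ t ∈ Ioc 0 r₀, a'' t + (p' t / p t) * a' t + lam * a t = 0) :
    ∀ t ∈ Ioc 0 r₀, a' t < 0 := by
  set g : ℝ → ℝ := fun t => p t * a' t with hg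
  have hgc : ContinuousOn g (Icc 0 r₀) := hpc.mul ha'c
  have hgd : ∀ x ∈ interior (Icc (0:ℝ) r₀), deriv g x < 0 := by
    intro x hx
    rw [interior_Icc] at hx
    have hxI : x ∈ Ioc 0 r₀ := ⟨hx.1, hx.2.le⟩
    have hmem : Icc (0:ℝ) r₀ ∈ nhds x := Icc_mem_nhds hx.1 hx.2
    have hpdx : HasDerivAt p (p' x) x := (hpd x hxI).hasDerivAt hmem
    have ha'dx : HasDerivAt a' (a'' x) x := (ha'd x hxI).hasDerivAt hmem
    have hgdx : HasDerivAt g (p' x * a' x + p x * a'' x) x := hpdx.mul ha'dx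
    rw [hgdx.deriv]
    have hpx := hppos x hxI
    have hax := hapos x ⟨hx.1.le, hx.2⟩
    have h := heq x hxI
    have hA : a'' x = -(p' x / p x) * a' x - lam * a x := by linarith
    rw [hA]
    have : p x * (-(p' x / p x) * a' x - lam * a x)
        = -(p' x * a' x) - lam * (p x * a x) := by
      field_simp
    rw [this]
    have : 0 < lam * (p x * a x) := by positivity
    linarith
  have hanti : StrictAntiOn g (Icc 0 r₀) :=
    strictAntiOn_of_deriv_neg (convex_Icc 0 r₀) hgc hgd
  intro t ht
  have h0 : (0:ℝ) ∈ Icc (0:ℝ) r₀ := ⟨le_rfl, hr.le⟩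
  have htI : t ∈ Icc (0:ℝ) r₀ := ⟨ht.1.le, ht.2⟩
  have := hanti h0 htI ht.1
  have hg0 : g 0 = 0 := by simp [hg, hp0]
  rw [hg0] at this
  have hpt := hppos t ht
  have hgt : p t * a' t < 0 := this
  nlinarith [hgt]
end

section
/- Let r₀ > 0, λ ∈ ℝ, and ν₁ ≠ ν₂ be real numbers. Let p : [0, r₀] → ℝ be continuous with p(0) = 0 and continuously differentiable on (0, r₀], and let q : (0, r₀) → ℝ be continuous. Let a, b : [0, r₀] → ℝ be continuously differentiable on [0, r₀] and twice differentiable on (0, r₀), with a(r₀) = b(r₀) = 0, satisfying (p a')'(t) + (λ − ν₁ q(t)) p(t) a(t) = 0 and (p b')'(t) + (λ − ν₂ q(t)) p(t) b(t) = 0 for all t ∈ (0, r₀). Assume t ↦ q(t) p(t) a(t) b(t) is integrable on (0, r₀). Then ∫₀^{r₀} q(t) p(t) a(t) b(t) dt = 0. -/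
open Set MeasureTheory

/-!
Lagrange's identity: for `W = p a' b - p b' a` the two equations give
`W' = (ν₁ - ν₂) q p a b` on `(0, r₀)`. The boundary terms of `W` vanish, at `0` because `p(0) = 0`
and at `r₀` because `a(r₀) = b(r₀) = 0`, so `(ν₁ - ν₂) ∫ q p a b = W(r₀) - W(0) = 0`.
-/

theorem integral_Ioo_eq_sub_of_hasDerivAt_of_le {E : Type*} [NormedAddCommGroup E]
    [NormedSpace ℝ E] [CompleteSpace E] {f f' : ℝ → E} {a b : ℝ} (hab : a ≤ b)
    (hcont : ContinuousOn f (Icc a b)) (hderiv : ∀ x ∈ Ioo a b, HasDerivAt f (f' x) x)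
    (hint : IntegrableOn f' (Ioo a b)) :
    ∫ x in Ioo a b, f' x = f b - f a := by
  rw [← integral_Ioc_eq_integral_Ioo, ← intervalIntegral.integral_of_le hab]
  exact intervalIntegral.integral_eq_sub_of_hasDeriv_right_of_le hab hcont
    (fun x hx => (hderiv x hx).hasDerivWithinAt)
    ((intervalIntegrable_iff_integrableOn_Ioo_of_le hab).mpr hint)

theorem hasDerivAt_lagrange_identity {p q a a' b b' : ℝ → ℝ} {lam ν₁ ν₂ t : ℝ}
    (ha : HasDerivAt a (a' t) t) (hb : HasDerivAt b (b' t) t)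
    (heqa : HasDerivAt (fun s => p s * a' s) (-((lam - ν₁ * q t) * (p t * a t))) t)
    (heqb : HasDerivAt (fun s => p s * b' s) (-((lam - ν₂ * q t) * (p t * b t))) t) :
    HasDerivAt (fun s => p s * a' s * b s - p s * b' s * a s)
      ((ν₁ - ν₂) * (q t * p t * a t * b t)) t :=
  ((heqa.mul hb).sub (heqb.mul ha)).congr_deriv (by ring)

theorem stmt_10_general (r₀ lam ν₁ ν₂ : ℝ) (hr : 0 < r₀) (hne : ν₁ ≠ ν₂)
    (p q a a' b b' : ℝ → ℝ)
    (hpc : ContinuousOn p (Icc 0 r₀)) (hp0 : p 0 = 0)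
    (had : ∀ t ∈ Icc 0 r₀, HasDerivWithinAt a (a' t) (Icc 0 r₀) t)
    (ha'c : ContinuousOn a' (Icc 0 r₀))
    (hbd : ∀ t ∈ Icc 0 r₀, HasDerivWithinAt b (b' t) (Icc 0 r₀) t)
    (hb'c : ContinuousOn b' (Icc 0 r₀))
    (har : a r₀ = 0) (hbr : b r₀ = 0)
    (heqa : ∀ t ∈ Ioo 0 r₀, HasDerivAt (fun s => p s * a' s)
      (-((lam - ν₁ * q t) * (p t * a t))) t)
    (heqb : ∀ t ∈ Ioo 0 r₀, HasDerivAt (fun s => p s * b' s)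
      (-((lam - ν₂ * q t) * (p t * b t))) t)
    (hint : IntegrableOn (fun t => q t * p t * a t * b t) (Ioo 0 r₀)) :
    ∫ t in Ioo (0 : ℝ) r₀, q t * p t * a t * b t = 0 := by
  have hac : ContinuousOn a (Icc 0 r₀) := fun t ht => (had t ht).continuousWithinAt
  have hbc : ContinuousOn b (Icc 0 r₀) := fun t ht => (hbd t ht).continuousWithinAt
  have hW : ∀ t ∈ Ioo 0 r₀, HasDerivAt (fun s => p s * a' s * b s - p s * b' s * a s)
      ((ν₁ - ν₂) * (q t * p t * a t * b t)) t := fun t ht =>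
    have hnhds : Icc 0 r₀ ∈ nhds t := Icc_mem_nhds ht.1 ht.2
    hasDerivAt_lagrange_identity ((had t (Ioo_subset_Icc_self ht)).hasDerivAt hnhds)
      ((hbd t (Ioo_subset_Icc_self ht)).hasDerivAt hnhds) (heqa t ht) (heqb t ht)
  have hftc := integral_Ioo_eq_sub_of_hasDerivAt_of_le hr.le
    (((hpc.mul ha'c).mul hbc).sub ((hpc.mul hb'c).mul hac)) hW (hint.const_mul _)
  simp only [integral_const_mul, Pi.sub_apply, Pi.mul_apply, har, hbr, hp0, mul_zero, zero_mul,
    sub_self] at hftc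
  exact (mul_eq_zero.mp hftc).resolve_left (sub_ne_zero.mpr hne)

/-- `L²_{pq}`-orthogonality of Sturm–Liouville solutions with the same
eigenvalue `λ` but distinct parameters `ν₁ ≠ ν₂`: if
`(p a')' + (λ - ν₁ q) p a = 0` and `(p b')' + (λ - ν₂ q) p b = 0` on
`(0, r₀)`, with `a(r₀) = b(r₀) = 0`, `p(0) = 0`, and `q p a b` integrable,
then `∫₀^{r₀} q p a b = 0`. -/
theorem stmt_10 (r₀ lam ν₁ ν₂ : ℝ) (hr : 0 < r₀) (hne : ν₁ ≠ ν₂)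
    (p p' q a a' b b' : ℝ → ℝ)
    (hpc : ContinuousOn p (Icc 0 r₀)) (hp0 : p 0 = 0)
    (hpd : ∀ t ∈ Ioc 0 r₀, HasDerivWithinAt p (p' t) (Icc 0 r₀) t)
    (hp'c : ContinuousOn p' (Ioc 0 r₀))
    (hq : ContinuousOn q (Ioo 0 r₀))
    (had : ∀ t ∈ Icc 0 r₀, HasDerivWithinAt a (a' t) (Icc 0 r₀) t)
    (ha'c : ContinuousOn a' (Icc 0 r₀))
    (hbd : ∀ t ∈ Icc 0 r₀, HasDerivWithinAt b (b' t) (Icc 0 r₀) t)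
    (hb'c : ContinuousOn b' (Icc 0 r₀))
    (har : a r₀ = 0) (hbr : b r₀ = 0)
    (heqa : ∀ t ∈ Ioo 0 r₀, HasDerivAt (fun s => p s * a' s)
      (-((lam - ν₁ * q t) * (p t * a t))) t)
    (heqb : ∀ t ∈ Ioo 0 r₀, HasDerivAt (fun s => p s * b' s)
      (-((lam - ν₂ * q t) * (p t * b t))) t)
    (hint : IntegrableOn (fun t => q t * p t * a t * b t) (Ioo 0 r₀)) :
    ∫ t in Ioo (0 : ℝ) r₀, q t * p t * a t * b t = 0 :=
  stmt_10_general r₀ lam ν₁ ν₂ hr hne p q a a' b b' hpc hp0 had ha'c hbd hb'c har hbr heqa heqb hint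
end

section
/- Let m ≥ 2 be an integer, r₀ > 0, and let B ⊂ ℝ^m be the open ball of radius r₀ centered at the origin. Let u be a C¹ function on the closed ball B̄ vanishing on the boundary sphere ∂B, and let φ be a C¹ function on B̄ with φ(0) = 0. Then the functions x ↦ φ(x) ⟨∇u(x), x/‖x‖⟩ and x ↦ u(x) (⟨∇φ(x), x/‖x‖⟩ + (m−1) φ(x)/‖x‖), defined for x ≠ 0, are integrable on B, and ∫_B φ(x) ⟨∇u(x), x/‖x‖⟩ dx = −∫_B u(x) (⟨∇φ(x), x/‖x‖⟩ + (m−1) φ(x)/‖x‖) dx. -/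
/-!
In polar coordinates `x = r • ω` the volume element is `r ^ (m - 1) dr dω`, and the sum of the two
integrands times `r ^ (m - 1)` is `d/dr (r ^ (m - 1) u (r • ω) φ (r • ω))` by the product rule.
This vanishes at `r = r₀` because `u = 0` on the sphere and at `r = 0` because `φ 0 = 0`, so every
ray integral, hence the whole integral of the sum, is zero. Both integrands are bounded on the ball:
the derivatives are continuous on the closed ball, and `|φ x| ≤ C ‖x‖` by the mean value theorem.
-/

open MeasureTheory Set
open scoped RealInnerProductSpace

noncomputable section

open Metric

namespace MeasureTheory

variable {F : Type*} [NormedAddCommGroup F] [NormedSpace ℝ F]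

theorem integral_volumeIoiPow (n : ℕ) (f : ℝ → F) :
    ∫ r, f r ∂Measure.volumeIoiPow n = ∫ r in Ioi (0 : ℝ), r ^ n • f r := by
  simp only [Measure.volumeIoiPow, ENNReal.ofReal]
  rw [integral_withDensity_eq_integral_smul (measurable_subtype_coe.pow_const _).real_toNNReal,
    integral_subtype_comap measurableSet_Ioi fun r ↦ Real.toNNReal (r ^ n) • f r]
  refine setIntegral_congr_fun measurableSet_Ioi fun r hr ↦ ?_
  rw [NNReal.smul_def, Real.coe_toNNReal _ (pow_nonneg (le_of_lt hr) _)]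

variable {V : Type*} [NormedAddCommGroup V] [NormedSpace ℝ V] [FiniteDimensional ℝ V]
  [Nontrivial V] [MeasurableSpace V] [BorelSpace V] (μ : Measure V) [μ.IsAddHaarMeasure]

theorem integral_eq_integral_toSphere_integral_Ioi {f : V → F} (hf : Integrable f μ) :
    ∫ x, f x ∂μ = ∫ ω : sphere (0 : V) 1,
      (∫ r in Ioi (0 : ℝ), r ^ (Module.finrank ℝ V - 1) • f (r • (ω : V))) ∂μ.toSphere := by
  have hpolar := μ.measurePreserving_homeomorphUnitSphereProd
  have hemb := (homeomorphUnitSphereProd V).measurableEmbedding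
  have hcomp : (fun p : sphere (0 : V) 1 × Ioi (0 : ℝ) ↦ f (p.2.1 • p.1.1)) ∘
      homeomorphUnitSphereProd V = fun x ↦ f x.1 := by
    ext x
    simp [smul_inv_smul₀ (norm_ne_zero_iff.2 x.2)]
  have hint : Integrable (fun x : ({0}ᶜ : Set V) ↦ f x.1) (μ.comap (↑)) :=
    (integrableOn_iff_comap_subtypeVal (measurableSet_singleton 0).compl).1 hf.integrableOn
  calc ∫ x, f x ∂μ = ∫ x : ({0}ᶜ : Set V), f x ∂μ.comap (↑) := by
        rw [integral_subtype_comap (measurableSet_singleton _).compl, restrict_compl_singleton]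
    _ = ∫ p : sphere (0 : V) 1 × Ioi (0 : ℝ), f (p.2.1 • p.1.1)
          ∂μ.toSphere.prod (.volumeIoiPow (Module.finrank ℝ V - 1)) := by
        rw [← hpolar.integral_comp hemb, ← hcomp]
        rfl
    _ = _ := by
        rw [integral_prod _ ((hpolar.integrable_comp_emb hemb).1 (hcomp ▸ hint))]
        exact integral_congr_ae (.of_forall fun ω ↦ integral_volumeIoiPow _ fun r ↦ f (r • ω.1))

theorem setIntegral_ball_eq_integral_toSphere_integral_Ioo {f : V → F} {R : ℝ}
    (hf : IntegrableOn f (ball 0 R) μ) :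
    ∫ x in ball 0 R, f x ∂μ = ∫ ω : sphere (0 : V) 1,
      (∫ r in Ioo 0 R, r ^ (Module.finrank ℝ V - 1) • f (r • (ω : V))) ∂μ.toSphere := by
  rw [← integral_indicator measurableSet_ball, integral_eq_integral_toSphere_integral_Ioi μ
    ((integrable_indicator_iff measurableSet_ball).2 hf)]
  refine integral_congr_ae (.of_forall fun ω ↦ ?_)
  dsimp only
  rw [← inter_eq_right.2 (show Ioo (0 : ℝ) R ⊆ Ioi 0 from Ioo_subset_Ioi_self),
    ← setIntegral_indicator measurableSet_Ioo]
  refine setIntegral_congr_fun measurableSet_Ioi fun r (hr : 0 < r) ↦ ?_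
  have hnorm : ‖r • (ω : V)‖ = r := by simp [norm_smul, abs_of_pos hr]
  by_cases hrR : r < R <;> simp [indicator, hnorm, hrR, hr]

end MeasureTheory

section Calculus

variable {V F : Type*} [NormedAddCommGroup V] [NormedSpace ℝ V]
  [NormedAddCommGroup F] [NormedSpace ℝ F]

theorem ContDiffOn.differentiableAt_of_mem_ball {f : V → F} {c x : V} {R : ℝ}
    (hf : ContDiffOn ℝ 1 f (closedBall c R)) (hx : x ∈ ball c R) : DifferentiableAt ℝ f x :=
  (hf.differentiableOn one_ne_zero x (ball_subset_closedBall hx)).differentiableAt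
    (closedBall_mem_nhds_of_mem hx)

theorem ContinuousLinearMap.norm_apply_inv_norm_smul_le (L : V →L[ℝ] F) (x : V) :
    ‖L (‖x‖⁻¹ • x)‖ ≤ ‖L‖ := by
  rcases eq_or_ne x 0 with rfl | hx
  · simp
  · calc ‖L (‖x‖⁻¹ • x)‖ ≤ ‖L‖ * ‖‖x‖⁻¹ • x‖ := L.le_opNorm _
      _ = ‖L‖ := by
        rw [norm_smul, norm_inv, norm_norm, inv_mul_cancel₀ (norm_ne_zero_iff.2 hx), mul_one]

theorem hasDerivAt_pow_mul_comp_smul {h : V → ℝ} {r : ℝ} {ω : V} (n : ℕ)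
    (hh : DifferentiableAt ℝ h (r • ω)) :
    HasDerivAt (fun s : ℝ ↦ s ^ n * h (s • ω))
      (n * r ^ (n - 1) * h (r • ω) + r ^ n * fderiv ℝ h (r • ω) ω) r := by
  have hray : HasDerivAt (fun s : ℝ ↦ s • ω) ω r := by
    simpa using (hasDerivAt_id r).smul_const ω
  exact (hasDerivAt_pow n r).mul (hh.hasFDerivAt.comp_hasDerivAt r hray)

/-- The integrand is `d/dr (r ^ n * h (r • ω))`, written with `fderivWithin` on the closed ball
so that it is continuous up to `r = R`. -/
theorem integral_Ioo_pow_mul_fderiv_add_div_eq_zero {h : V → ℝ} {R : ℝ} (hR : 0 < R)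
    (hh : ContDiffOn ℝ 1 h (closedBall 0 R)) (hR0 : ∀ x ∈ sphere (0 : V) R, h x = 0)
    (h0 : h 0 = 0) {ω : V} (hω : ‖ω‖ = 1) (n : ℕ) :
    ∫ r in Ioo 0 R, r ^ n * (fderiv ℝ h (r • ω) ω + n * h (r • ω) / r) = 0 := by
  set K := closedBall (0 : V) R
  have hnorm (r : ℝ) (hr : 0 ≤ r) : ‖r • ω‖ = r := by simp [norm_smul, hω, abs_of_nonneg hr]
  have hK (r : ℝ) (hr : r ∈ Icc 0 R) : r • ω ∈ K := by simpa [K, hnorm r hr.1] using hr.2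
  have hball (r : ℝ) (hr : r ∈ Ioo 0 R) : r • ω ∈ ball 0 R := by
    simpa [hnorm r hr.1.le] using hr.2
  have hfderiv (r : ℝ) (hr : r ∈ Ioo 0 R) : fderivWithin ℝ h K (r • ω) = fderiv ℝ h (r • ω) :=
    fderivWithin_of_mem_nhds (closedBall_mem_nhds_of_mem (hball r hr))
  have hray : ContinuousOn (fun r : ℝ ↦ r • ω) (Icc 0 R) := by fun_prop
  have hcont : ContinuousOn (fun r ↦ n * r ^ (n - 1) * h (r • ω) +
      r ^ n * fderivWithin ℝ h K (r • ω) ω) (Icc 0 R) := by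
    have hDh := hh.continuousOn_fderivWithin
      (uniqueDiffOn_convex (convex_closedBall 0 R) (by simp [K, interior_closedBall _ hR.ne', hR]))
      le_rfl
    exact (continuousOn_const.mul (continuousOn_pow _)).mul (hh.continuousOn.comp hray hK) |>.add
      ((continuousOn_pow _).mul ((hDh.comp hray hK).clm_apply continuousOn_const))
  calc ∫ r in Ioo 0 R, r ^ n * (fderiv ℝ h (r • ω) ω + n * h (r • ω) / r)
      = ∫ r in Ioo 0 R, (n * r ^ (n - 1) * h (r • ω) + r ^ n * fderivWithin ℝ h K (r • ω) ω) := by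
        refine setIntegral_congr_fun measurableSet_Ioo fun r hr ↦ ?_
        rw [hfderiv r hr]
        rcases n with _ | n
        · simp
        · rw [Nat.add_sub_cancel, pow_succ]
          field_simp [hr.1.ne']
          ring
    _ = ∫ r in 0..R, (n * r ^ (n - 1) * h (r • ω) + r ^ n * fderivWithin ℝ h K (r • ω) ω) := by
        rw [intervalIntegral.integral_of_le hR.le, integral_Ioc_eq_integral_Ioo]
    _ = R ^ n * h (R • ω) - 0 ^ n * h ((0 : ℝ) • ω) := by
        refine intervalIntegral.integral_eq_sub_of_hasDerivAt_of_le hR.le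
          ((continuousOn_pow n).mul (hh.continuousOn.comp hray hK)) (fun r hr ↦ ?_)
          (hcont.intervalIntegrable_of_Icc hR.le)
        rw [hfderiv r hr]
        exact hasDerivAt_pow_mul_comp_smul n (hh.differentiableAt_of_mem_ball (hball r hr))
    _ = 0 := by simp [hR0 _ (by simpa using hnorm R hR.le), h0]

variable [FiniteDimensional ℝ V]

theorem ContDiffOn.exists_norm_fderiv_le {f : V → F} {c : V} {R : ℝ} (hR : 0 < R)
    (hf : ContDiffOn ℝ 1 f (closedBall c R)) : ∃ C, ∀ x ∈ ball c R, ‖fderiv ℝ f x‖ ≤ C := by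
  have hDf := hf.continuousOn_fderivWithin
    (uniqueDiffOn_convex (convex_closedBall c R) (by simp [interior_closedBall _ hR.ne', hR]))
    le_rfl
  obtain ⟨C, hC⟩ := (isCompact_closedBall c R).exists_bound_of_continuousOn hDf
  refine ⟨C, fun x hx ↦ ?_⟩
  rw [← fderivWithin_of_mem_nhds (closedBall_mem_nhds_of_mem hx)]
  exact hC x (ball_subset_closedBall hx)

end Calculus

section Integrability

variable {V : Type*} [NormedAddCommGroup V] [NormedSpace ℝ V] [FiniteDimensional ℝ V]
  [MeasurableSpace V] [BorelSpace V] (μ : Measure V) [IsFiniteMeasureOnCompacts μ]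

theorem integrableOn_ball_fderiv_apply_inv_norm_smul {f : V → ℝ} {R : ℝ} (hR : 0 < R)
    (hf : ContDiffOn ℝ 1 f (closedBall 0 R)) :
    IntegrableOn (fun x ↦ fderiv ℝ f x (‖x‖⁻¹ • x)) (ball 0 R) μ := by
  obtain ⟨C, hC⟩ := hf.exists_norm_fderiv_le hR
  have hmeas : Measurable fun x : V ↦ fderiv ℝ f x (‖x‖⁻¹ • x) :=
    isBoundedBilinearMap_apply.continuous.measurable2 (measurable_fderiv ℝ f)
      (measurable_norm.inv.smul measurable_id)
  refine .of_bound measure_ball_lt_top hmeas.aestronglyMeasurable C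
    (ae_restrict_of_forall_mem measurableSet_ball fun x hx ↦ ?_)
  exact ((fderiv ℝ f x).norm_apply_inv_norm_smul_le x).trans (hC x hx)

theorem integrableOn_ball_div_norm {f : V → ℝ} {R : ℝ} (hR : 0 < R)
    (hf : ContDiffOn ℝ 1 f (closedBall 0 R)) (hf0 : f 0 = 0) :
    IntegrableOn (fun x ↦ f x / ‖x‖) (ball 0 R) μ := by
  obtain ⟨C, hC⟩ := hf.exists_norm_fderiv_le hR
  have hC0 : 0 ≤ C := (norm_nonneg _).trans (hC 0 (mem_ball_self hR))
  have hmeas : AEStronglyMeasurable (fun x ↦ f x / ‖x‖) (μ.restrict (ball 0 R)) :=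
    ((hf.continuousOn.mono ball_subset_closedBall).aestronglyMeasurable measurableSet_ball).div₀
      measurable_norm.aestronglyMeasurable
  refine .of_bound measure_ball_lt_top hmeas C
    (ae_restrict_of_forall_mem measurableSet_ball fun x hx ↦ ?_)
  have hlip : ‖f x‖ ≤ C * ‖x‖ := by
    simpa [hf0] using (convex_ball (0 : V) R).norm_image_sub_le_of_norm_fderiv_le
      (fun y hy ↦ hf.differentiableAt_of_mem_ball hy) hC (mem_ball_self hR) hx
  rw [norm_div, norm_norm]
  exact div_le_of_le_mul₀ (norm_nonneg x) hC0 hlip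

end Integrability

/-- Radial integration by parts on a Euclidean ball: for `u ∈ C¹(B̄)` vanishing
on the boundary sphere and `φ ∈ C¹(B̄)` with `φ(0) = 0`,
`∫_B φ ⟪∇u, x/‖x‖⟫ = −∫_B u (⟪∇φ, x/‖x‖⟫ + (m−1) φ/‖x‖)`,
both integrands being integrable on `B`. -/
theorem stmt_12 (m : ℕ) (hm : 2 ≤ m) (r₀ : ℝ) (hr : 0 < r₀)
    (u φ : E m → ℝ)
    (hu : ContDiffOn ℝ 1 u (Metric.closedBall 0 r₀))
    (hu0 : ∀ x ∈ Metric.sphere (0 : E m) r₀, u x = 0)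
    (hφ : ContDiffOn ℝ 1 φ (Metric.closedBall 0 r₀))
    (hφ0 : φ 0 = 0) :
    IntegrableOn (fun x => φ x * ⟪gradient u x, ‖x‖⁻¹ • x⟫)
      (Metric.ball (0 : E m) r₀) ∧
    IntegrableOn (fun x => u x * (⟪gradient φ x, ‖x‖⁻¹ • x⟫ +
        ((m : ℝ) - 1) * φ x / ‖x‖)) (Metric.ball (0 : E m) r₀) ∧
    ∫ x in Metric.ball (0 : E m) r₀, φ x * ⟪gradient u x, ‖x‖⁻¹ • x⟫ =
      -∫ x in Metric.ball (0 : E m) r₀,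
        u x * (⟪gradient φ x, ‖x‖⁻¹ • x⟫ + ((m : ℝ) - 1) * φ x / ‖x‖) := by
  have : Nonempty (Fin m) := ⟨⟨0, by omega⟩⟩
  simp only [inner_gradient_left, mul_div_assoc]
  have hint₁ : IntegrableOn (fun x ↦ φ x * fderiv ℝ u x (‖x‖⁻¹ • x)) (ball 0 r₀) :=
    (integrableOn_ball_fderiv_apply_inv_norm_smul volume hr hu).continuousOn_mul_of_subset
      hφ.continuousOn (isCompact_closedBall 0 r₀) measurableSet_ball ball_subset_closedBall
  have hint₂ : IntegrableOn (fun x ↦ u x * (fderiv ℝ φ x (‖x‖⁻¹ • x) +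
      ((m : ℝ) - 1) * (φ x / ‖x‖))) (ball 0 r₀) :=
    ((integrableOn_ball_fderiv_apply_inv_norm_smul volume hr hφ).add
      ((integrableOn_ball_div_norm volume hr hφ hφ0).const_mul _)).continuousOn_mul_of_subset
      hu.continuousOn (isCompact_closedBall 0 r₀) measurableSet_ball ball_subset_closedBall
  refine ⟨hint₁, hint₂, ?_⟩
  rw [eq_neg_iff_add_eq_zero, ← integral_add hint₁ hint₂,
    setIntegral_ball_eq_integral_toSphere_integral_Ioo volume (by exact hint₁.add hint₂),
    finrank_euclideanSpace_fin]
  refine integral_eq_zero_of_ae (.of_forall fun ω ↦ ?_)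
  have hω : ‖(ω : E m)‖ = 1 := mem_sphere_zero_iff_norm.1 ω.2
  refine (setIntegral_congr_fun measurableSet_Ioo fun r hr ↦ ?_).trans
    (integral_Ioo_pow_mul_fderiv_add_div_eq_zero hr (hu.mul hφ) (fun x hx ↦ by simp [hu0 x hx])
      (by simp [hφ0]) hω (m - 1))
  have hnorm : ‖r • (ω : E m)‖ = r := by simp [norm_smul, hω, abs_of_pos hr.1]
  have hx : r • (ω : E m) ∈ ball 0 r₀ := by simpa [hnorm] using hr.2
  rw [fderiv_fun_mul (hu.differentiableAt_of_mem_ball hx) (hφ.differentiableAt_of_mem_ball hx),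
    hnorm, inv_smul_smul₀ hr.1.ne', Nat.cast_pred (by omega), smul_eq_mul]
  simp only [add_apply, smul_apply, smul_eq_mul]
  ring
end
end

section
/- Let m ≥ 2 be an integer and r₀ > 0. Let ρ : [0, r₀] → ℝ be continuous and continuously differentiable on (0, r₀], with ρ(0) = 0 and ρ > 0 on (0, r₀], and let q₀ : [0, r₀] → ℝ be continuous. Suppose h₁, h₂ : [0, r₀] → ℝ are continuous with h₁(0) = h₂(0) = 0, differentiable on (0, r₀], and both satisfy the Riccati equation h'(t) = q₀(t) − (m−1) (ρ'(t)/ρ(t)) h(t) + h(t)²/2 for all t ∈ (0, r₀]. Then h₁ = h₂ on [0, r₀]. -/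
/-!
With `μ = ρ ^ (m - 1)` we have `μ' = (m - 1) (ρ'/ρ) μ`, so `μ` is an integrating factor for the
linear part of the equation, and `w = μ (h₁ - h₂)` solves the linear equation
`w' = ((h₁ + h₂)/2) w`, whose coefficient is bounded on `[0, r₀]`. Since `w` is continuous with
`w(0) = 0`, Grönwall's inequality on `[ε, t]` followed by `ε → 0⁺` gives `w = 0`; the singularity
of `ρ'/ρ` at `0` never enters. Finally `μ > 0` on `(0, r₀]`.
-/

open Set Filter Topology Real

/-- A variant of `eq_zero_of_abs_deriv_le_mul_abs_self_of_eq_zero_right` in which nothing is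
assumed at the left endpoint beyond continuity. -/
theorem eq_zero_of_norm_deriv_le_mul_norm_self_on_Ioo_of_eq_zero_left
    {E : Type*} [NormedAddCommGroup E] [NormedSpace ℝ E] {f f' : ℝ → E} {K a b : ℝ}
    (hf : ContinuousOn f (Icc a b)) (hf' : ∀ x ∈ Ioo a b, HasDerivWithinAt f (f' x) (Ici x) x)
    (ha : f a = 0) (bound : ∀ x ∈ Ioo a b, ‖f' x‖ ≤ K * ‖f x‖) :
    EqOn f 0 (Icc a b) := by
  intro x hx
  rcases hx.1.eq_or_lt with rfl | hax
  · exact ha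
  have hle : ∀ ε ∈ Ioo a x, ‖f x‖ ≤ ‖f ε‖ * exp (K * (x - ε)) := fun ε hε => by
    have hsub : Icc ε b ⊆ Icc a b := Icc_subset_Icc_left hε.1.le
    have := norm_le_gronwallBound_of_norm_deriv_right_le (hf.mono hsub)
      (fun y hy => hf' y ⟨hε.1.trans_le hy.1, hy.2⟩) le_rfl
      (fun y hy => (add_zero (K * ‖f y‖)).symm ▸ bound y ⟨hε.1.trans_le hy.1, hy.2⟩)
      x ⟨hε.2.le, hx.2⟩
    rwa [gronwallBound_ε0] at this
  have : NeBot (𝓝[Ioo a x] a) := left_nhdsWithin_Ioo_neBot hax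
  have hlim : Tendsto (fun ε => ‖f ε‖ * exp (K * (x - ε))) (𝓝[Ioo a x] a) (𝓝 0) := by
    have hfa : Tendsto f (𝓝[Ioo a x] a) (𝓝 0) :=
      ha ▸ (hf a (left_mem_Icc.2 (hax.le.trans hx.2))).mono (Ioo_subset_Icc_self.trans
        (Icc_subset_Icc_right hx.2))
    have hexp : ContinuousWithinAt (fun ε => exp (K * (x - ε))) (Ioo a x) a := by fun_prop
    simpa using hfa.norm.mul hexp.tendsto
  exact norm_le_zero_iff.1 (ge_of_tendsto hlim (eventually_mem_nhdsWithin.mono hle))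

theorem HasDerivWithinAt.pow_of_ne_zero {ρ : ℝ → ℝ} {ρ' t : ℝ} {s : Set ℝ}
    (hρ : HasDerivWithinAt ρ ρ' s t) (n : ℕ) (hρt : ρ t ≠ 0) :
    HasDerivWithinAt (fun x => ρ x ^ n) (n * (ρ' / ρ t) * ρ t ^ n) s t := by
  refine (hρ.fun_pow n).congr_deriv ?_
  rcases n with _ | n
  · simp
  · rw [Nat.add_sub_cancel, pow_succ]
    field_simp

theorem hasDerivWithinAt_mul_sub_of_riccati {μ h₁ h₂ : ℝ → ℝ} {s : Set ℝ} {t c₀ c₁ c₂ : ℝ}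
    (hμ : HasDerivWithinAt μ (-c₁ * μ t) s t)
    (hd₁ : HasDerivWithinAt h₁ (c₀ + c₁ * h₁ t + c₂ * h₁ t ^ 2) s t)
    (hd₂ : HasDerivWithinAt h₂ (c₀ + c₁ * h₂ t + c₂ * h₂ t ^ 2) s t) :
    HasDerivWithinAt (fun x => μ x * (h₁ x - h₂ x))
      (c₂ * (h₁ t + h₂ t) * (μ t * (h₁ t - h₂ t))) s t :=
  (hμ.fun_mul (hd₁.fun_sub hd₂)).congr_deriv (by ring)

theorem stmt_14_general (m : ℕ) (hm : 2 ≤ m) (r₀ : ℝ)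
    (ρ ρ' q₀ h₁ h₂ : ℝ → ℝ)
    (hρc : ContinuousOn ρ (Icc 0 r₀))
    (hρpos : ∀ t ∈ Ioc 0 r₀, 0 < ρ t)
    (hρd : ∀ t ∈ Ioc 0 r₀, HasDerivWithinAt ρ (ρ' t) (Icc 0 r₀) t)
    (hh₁c : ContinuousOn h₁ (Icc 0 r₀)) (hh₁0 : h₁ 0 = 0)
    (hh₂c : ContinuousOn h₂ (Icc 0 r₀)) (hh₂0 : h₂ 0 = 0)
    (hode₁ : ∀ t ∈ Ioc 0 r₀, HasDerivWithinAt h₁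
      (q₀ t - ((m : ℝ) - 1) * (ρ' t / ρ t) * h₁ t + h₁ t ^ 2 / 2) (Ioc 0 r₀) t)
    (hode₂ : ∀ t ∈ Ioc 0 r₀, HasDerivWithinAt h₂
      (q₀ t - ((m : ℝ) - 1) * (ρ' t / ρ t) * h₂ t + h₂ t ^ 2 / 2) (Ioc 0 r₀) t) :
    EqOn h₁ h₂ (Icc 0 r₀) := by
  set w : ℝ → ℝ := fun t => ρ t ^ (m - 1) * (h₁ t - h₂ t)
  have hcast : ((m - 1 : ℕ) : ℝ) = m - 1 := by push_cast [one_le_two.trans hm]; ring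
  have hw' : ∀ t ∈ Ioc 0 r₀, HasDerivWithinAt w ((h₁ t + h₂ t) / 2 * w t) (Ioc 0 r₀) t := by
    intro t ht
    have hμ := ((hρd t ht).mono Ioc_subset_Icc_self).pow_of_ne_zero (m - 1) (hρpos t ht).ne'
    refine (hasDerivWithinAt_mul_sub_of_riccati (c₀ := q₀ t)
      (c₁ := -((m - 1) * (ρ' t / ρ t))) (c₂ := 1 / 2)
      (hμ.congr_deriv (by rw [hcast]; ring)) ((hode₁ t ht).congr_deriv (by ring))
      ((hode₂ t ht).congr_deriv (by ring))).congr_deriv (by ring)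
  obtain ⟨K, hK⟩ := isCompact_Icc.exists_bound_of_continuousOn ((hh₁c.add hh₂c).div_const 2)
  have hw0 : EqOn w 0 (Icc 0 r₀) :=
    eq_zero_of_norm_deriv_le_mul_norm_self_on_Ioo_of_eq_zero_left
      ((hρc.pow _).mul (hh₁c.sub hh₂c))
      (fun t ht => ((hw' t (Ioo_subset_Ioc_self ht)).hasDerivAt
        (Ioc_mem_nhds ht.1 ht.2)).hasDerivWithinAt)
      (by simp [w, hh₁0, hh₂0])
      (fun t ht => by
        rw [norm_mul]
        exact mul_le_mul_of_nonneg_right (hK t (Ioo_subset_Icc_self ht)) (norm_nonneg _))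
  intro t ht
  rcases ht.1.eq_or_lt with rfl | ht0
  · rw [hh₁0, hh₂0]
  · simpa [w, (hρpos t ⟨ht0, ht.2⟩).ne', sub_eq_zero] using hw0 ht

/-- Uniqueness for the Riccati equation
`h' = q₀ − (m−1)(ρ'/ρ) h + h²/2` on `(0, r₀]` with regular singular point at
`t = 0` (`ρ(0) = 0`, `ρ > 0` on `(0, r₀]`) and initial condition `h(0) = 0`:
two continuous solutions coincide on `[0, r₀]`. -/
theorem stmt_14 (m : ℕ) (hm : 2 ≤ m) (r₀ : ℝ) (hr : 0 < r₀)
    (ρ ρ' q₀ h₁ h₂ : ℝ → ℝ)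
    (hρc : ContinuousOn ρ (Icc 0 r₀)) (hρ0 : ρ 0 = 0)
    (hρpos : ∀ t ∈ Ioc 0 r₀, 0 < ρ t)
    (hρd : ∀ t ∈ Ioc 0 r₀, HasDerivWithinAt ρ (ρ' t) (Icc 0 r₀) t)
    (hρ'c : ContinuousOn ρ' (Ioc 0 r₀))
    (hq₀ : ContinuousOn q₀ (Icc 0 r₀))
    (hh₁c : ContinuousOn h₁ (Icc 0 r₀)) (hh₁0 : h₁ 0 = 0)
    (hh₂c : ContinuousOn h₂ (Icc 0 r₀)) (hh₂0 : h₂ 0 = 0)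
    (hode₁ : ∀ t ∈ Ioc 0 r₀, HasDerivWithinAt h₁
      (q₀ t - ((m : ℝ) - 1) * (ρ' t / ρ t) * h₁ t + h₁ t ^ 2 / 2) (Ioc 0 r₀) t)
    (hode₂ : ∀ t ∈ Ioc 0 r₀, HasDerivWithinAt h₂
      (q₀ t - ((m : ℝ) - 1) * (ρ' t / ρ t) * h₂ t + h₂ t ^ 2 / 2) (Ioc 0 r₀) t) :
    EqOn h₁ h₂ (Icc 0 r₀) :=
  stmt_14_general m hm r₀ ρ ρ' q₀ h₁ h₂ hρc hρpos hρd hh₁c hh₁0 hh₂c hh₂0 hode₁ hode₂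
end
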